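/- For the 3-sun graph $S$ (of order 6), $rx_3(S) = 4$. -/

import Mathlib

/-!
Lower bound: a rainbow tree containing the three degree-2 vertices `0, 2, 4` also contains a
neighbour of each of them. Their neighbourhoods `{1, 5}, {1, 3}, {3, 5}` have no common vertex,
so the tree has at least five vertices, hence at least four edges, all of distinct colors.
Upper bound: for an explicit 4-coloring, every 3-set lies in one of four rainbow trees, namely
spanning trees of the 3-sun minus `2`, minus `3`, minus `4`, and the path `2 3 5 4`.
-/

open SimpleGraph

/-- An edge-coloring `c` is a `k`-rainbow coloring of `G` if every `k`-set of vertices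
is contained in a rainbow tree: a subgraph of `G` that is a tree, contains the `k` vertices,
and whose edges receive pairwise distinct colors. -/
def IsRainbowColoring {V : Type*} [Fintype V] (G : SimpleGraph V) {α : Type*}
    (c : Sym2 V → α) (k : ℕ) : Prop :=
  ∀ S : Finset V, S.card = k →
    ∃ T : G.Subgraph, (↑S : Set V) ⊆ T.verts ∧ T.coe.IsTree ∧ Set.InjOn c T.edgeSet

/-- The `k`-rainbow index of `G`: the minimum number of colors in a `k`-rainbow coloring. -/
noncomputable def rxk {V : Type*} [Fintype V] (G : SimpleGraph V) (k : ℕ) : ℕ :=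
  sInf {q | ∃ c : Sym2 V → Fin q, IsRainbowColoring G c k}

/-- The 3-sun: a 6-cycle `0 1 2 3 4 5 0` together with the triangle `1 3 5`. -/
def threeSun : SimpleGraph (Fin 6) :=
  SimpleGraph.fromEdgeSet
    {s(0, 1), s(1, 2), s(2, 3), s(3, 4), s(4, 5), s(5, 0), s(1, 3), s(3, 5), s(5, 1)}

namespace SimpleGraph

variable {V α : Type*} {G : SimpleGraph V}

lemma Subgraph.ncard_edgeSet_coe (H : G.Subgraph) : H.coe.edgeSet.ncard = H.edgeSet.ncard := by
  rw [← H.image_coe_edgeSet_coe,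
    Set.ncard_image_of_injective _ (Sym2.map.injective Subtype.val_injective)]

lemma Subgraph.coe_isTree_iff {H : G.Subgraph} (hH : H.verts.Finite) :
    H.coe.IsTree ↔ H.Connected ∧ H.edgeSet.ncard + 1 = H.verts.ncard := by
  have := hH.to_subtype
  rw [isTree_iff_connected_and_card, Subgraph.connected_iff', Nat.card_coe_set_eq,
    H.ncard_edgeSet_coe, Nat.card_coe_set_eq]

lemma Subgraph.ncard_verts_le_of_injOn [Finite V] [Finite α] {T : G.Subgraph}
    (hT : T.coe.IsTree) {c : Sym2 V → α} (hc : Set.InjOn c T.edgeSet) :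
    T.verts.ncard ≤ Nat.card α + 1 := by
  rw [← ((Subgraph.coe_isTree_iff T.verts.toFinite).1 hT).2, ← hc.ncard_image]
  exact Nat.add_le_add_right (Set.ncard_le_card _) 1

lemma Walk.toSubgraph_coe_isTree [DecidableEq V] {u v : V} (p : G.Walk u v)
    (h : p.edges.toFinset.card + 1 = p.support.toFinset.card) : p.toSubgraph.coe.IsTree := by
  have hverts : p.toSubgraph.verts = ↑p.support.toFinset := by
    rw [Walk.verts_toSubgraph, List.coe_toFinset]
  rw [Subgraph.coe_isTree_iff (hverts ▸ Finset.finite_toSet _)]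
  refine ⟨p.toSubgraph_connected, ?_⟩
  rwa [hverts, Walk.edgeSet_toSubgraph, Walk.edgeSet, ← List.coe_toFinset,
    Set.ncard_coe_finset, Set.ncard_coe_finset]

lemma Walk.exists_rainbow_tree [DecidableEq V] [DecidableEq α] (c : Sym2 V → α) {u v : V}
    (p : G.Walk u v) {S : Finset V} (hS : S ⊆ p.support.toFinset)
    (htree : p.edges.toFinset.card + 1 = p.support.toFinset.card)
    (hrainbow : (p.edges.toFinset.image c).card = p.edges.toFinset.card) :
    ∃ T : G.Subgraph, ↑S ⊆ T.verts ∧ T.coe.IsTree ∧ Set.InjOn c T.edgeSet := by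
  refine ⟨p.toSubgraph, ?_, p.toSubgraph_coe_isTree htree, ?_⟩
  · rw [Walk.verts_toSubgraph, ← List.coe_toFinset]
    exact_mod_cast hS
  · rw [Walk.edgeSet_toSubgraph, Walk.edgeSet, ← List.coe_toFinset]
    exact Finset.card_image_iff.1 hrainbow

end SimpleGraph

instance : DecidableRel threeSun.Adj :=
  inferInstanceAs (DecidableRel (fromEdgeSet _).Adj)

namespace threeSun

def coloring (e : Sym2 (Fin 6)) : Fin 4 :=
  if e = s(4, 5) ∨ e = s(1, 3) then 1
  else if e = s(0, 5) ∨ e = s(3, 5) then 2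
  else if e = s(1, 5) then 3
  else 0

lemma isRainbowColoring_coloring : IsRainbowColoring threeSun coloring 3 := by
  intro S hS
  have hcover : ∀ S : Finset (Fin 6), S.card = 3 →
      S ⊆ {0, 1, 3, 4, 5} ∨ S ⊆ {0, 1, 2, 4, 5} ∨ S ⊆ {0, 1, 2, 3, 5} ∨
        S ⊆ {2, 3, 4, 5} := by
    decide
  -- The walks below retrace edges; only the tree formed by their edges matters.
  obtain h | h | h | h := hcover S hS
  · let p : threeSun.Walk 0 4 := .cons (v := 1) (by decide) <| .cons (v := 5) (by decide) <|
      .cons (v := 3) (by decide) <| .cons (v := 5) (by decide) <| .cons (by decide) .nil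
    exact p.exists_rainbow_tree _ (h.trans (by decide)) (by decide) (by decide)
  · let p : threeSun.Walk 0 4 := .cons (v := 5) (by decide) <| .cons (v := 1) (by decide) <|
      .cons (v := 2) (by decide) <| .cons (v := 1) (by decide) <| .cons (v := 5) (by decide) <|
      .cons (by decide) .nil
    exact p.exists_rainbow_tree _ (h.trans (by decide)) (by decide) (by decide)
  · let p : threeSun.Walk 0 3 := .cons (v := 5) (by decide) <| .cons (v := 1) (by decide) <|
      .cons (v := 2) (by decide) <| .cons (v := 1) (by decide) <| .cons (by decide) .nil
    exact p.exists_rainbow_tree _ (h.trans (by decide)) (by decide) (by decide)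
  · let p : threeSun.Walk 2 4 := .cons (v := 3) (by decide) <| .cons (v := 5) (by decide) <|
      .cons (by decide) .nil
    exact p.exists_rainbow_tree _ (h.trans (by decide)) (by decide) (by decide)

lemma five_le_ncard_verts {T : threeSun.Subgraph} (hT : T.Connected)
    (h : {0, 2, 4} ⊆ T.verts) : 5 ≤ T.verts.ncard := by
  obtain ⟨h0, h2, h4⟩ : 0 ∈ T.verts ∧ 2 ∈ T.verts ∧ 4 ∈ T.verts := by
    simpa only [Set.insert_subset_iff, Set.singleton_subset_iff] using h
  have : Nontrivial T.verts := ⟨⟨⟨0, h0⟩, ⟨2, h2⟩, by simp⟩⟩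
  obtain ⟨z0, hz0⟩ := hT.preconnected.exists_adj_of_nontrivial ⟨0, h0⟩
  obtain ⟨z2, hz2⟩ := hT.preconnected.exists_adj_of_nontrivial ⟨2, h2⟩
  obtain ⟨z4, hz4⟩ := hT.preconnected.exists_adj_of_nontrivial ⟨4, h4⟩
  have hnbrs : ∀ a b c : Fin 6, threeSun.Adj 0 a → threeSun.Adj 2 b → threeSun.Adj 4 c →
      5 ≤ ({0, 2, 4, a, b, c} : Finset (Fin 6)).card := by
    decide
  have hsub : ↑({0, 2, 4, z0, z2, z4} : Finset (Fin 6)) ⊆ T.verts := by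
    simp only [Finset.coe_insert, Finset.coe_singleton, Set.insert_subset_iff,
      Set.singleton_subset_iff]
    exact ⟨h0, h2, h4, hz0.snd_mem, hz2.snd_mem, hz4.snd_mem⟩
  calc 5 ≤ ({0, 2, 4, z0, z2, z4} : Finset (Fin 6)).card :=
        hnbrs _ _ _ hz0.adj_sub hz2.adj_sub hz4.adj_sub
    _ ≤ T.verts.ncard := by
        rw [← Set.ncard_coe_finset]
        exact Set.ncard_le_ncard hsub

lemma four_le_of_isRainbowColoring {q : ℕ} {c : Sym2 (Fin 6) → Fin q}
    (hc : IsRainbowColoring threeSun c 3) : 4 ≤ q := by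
  obtain ⟨T, hS, hT, hinj⟩ := hc {0, 2, 4} rfl
  have hfive := five_le_ncard_verts ⟨hT.connected⟩
    (by simpa only [Finset.coe_insert, Finset.coe_singleton] using hS)
  have hcolors := Subgraph.ncard_verts_le_of_injOn hT hinj
  rw [Nat.card_fin] at hcolors
  omega

end threeSun

theorem stmt_17 : rxk threeSun 3 = 4 := by
  have h4 : 4 ∈ {q | ∃ c : Sym2 (Fin 6) → Fin q, IsRainbowColoring threeSun c 3} :=
    ⟨threeSun.coloring, threeSun.isRainbowColoring_coloring⟩
  refine le_antisymm (Nat.sInf_le h4) (le_csInf ⟨4, h4⟩ ?_)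
  rintro q ⟨c, hc⟩
  exact threeSun.four_le_of_isRainbowColoring hc
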